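/- arXiv:2101.06605 — 4 statements merged into one kernel-verified Lean document; each statement's English description precedes it below -/
import Mathlib

section
/- (Weighted permutation synchronization.) Let K ≥ 2 and N ≥ 1 be integers. For each ordered pair (k,l) with 1 ≤ k ≠ l ≤ K, let P^{kl} ∈ ℝ^{N×N} be an orthogonal matrix and w^{kl} ∈ ℝ, and assume w^{lk} = w^{kl} and P^{lk} = (P^{kl})ᵀ for all k ≠ l. Let L ∈ ℝ^{KN×KN} be the weighted Graph Connection Laplacian, which is symmetric, and let μ_1 ≤ … ≤ μ_{KN} be its eigenvalues in nondecreasing order with multiplicity. Then the minimum of the synchronization energy E(𝒫) = Σ_{k≠l} w^{kl} ‖P^k − P^{kl} P^l‖²_F over all stacked matrices 𝒫 = [P^1; …; P^K] ∈ ℝ^{KN×N} satisfying 𝒫ᵀ𝒫 = I_N equals 2(μ_1 + … + μ_N), and it is attained by any 𝒫 whose N columns are orthonormal eigenvectors of L corresponding to the N smallest eigenvalues μ_1, …, μ_N. -/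
open scoped Matrix

/-- Squared Frobenius norm of a real matrix. -/
def frobSq {m n : Type*} [Fintype m] [Fintype n] (A : Matrix m n ℝ) : ℝ :=
  ∑ i, ∑ j, (A i j) ^ 2

/-- The weighted Graph Connection Laplacian: the `(k,k)` diagonal block is
`w^k I_N` with `w^k = ∑_{l ≠ k} w^{kl}`, and the `(k,l)` block for `k ≠ l` is
`-w^{kl} P^{kl}`. -/
def GCL {K N : ℕ} (w : Fin K → Fin K → ℝ)
    (P : Fin K → Fin K → Matrix (Fin N) (Fin N) ℝ) :
    Matrix (Fin K × Fin N) (Fin K × Fin N) ℝ :=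
  Matrix.of fun p q =>
    if p.1 = q.1 then
      (if p.2 = q.2 then ∑ l ∈ Finset.univ.filter (fun l => l ≠ p.1), w p.1 l else 0)
    else -(w p.1 q.1 * P p.1 q.1 p.2 q.2)

/-- The `KN × N` matrix obtained by vertically stacking `K` matrices of size `N × N`. -/
def stacked {K N : ℕ} (P : Fin K → Matrix (Fin N) (Fin N) ℝ) :
    Matrix (Fin K × Fin N) (Fin N) ℝ :=
  Matrix.of fun p j => P p.1 p.2 j

/-- The synchronization energy `E(𝒫) = ∑_{k ≠ l} w^{kl} ‖P^k - P^{kl} P^l‖²_F`. -/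
def syncEnergy {K N : ℕ} (w : Fin K → Fin K → ℝ)
    (Pp : Fin K → Fin K → Matrix (Fin N) (Fin N) ℝ)
    (P : Fin K → Matrix (Fin N) (Fin N) ℝ) : ℝ :=
  ∑ k, ∑ l ∈ Finset.univ.filter (fun l => l ≠ k), w k l * frobSq (P k - Pp k l * P l)

/-! ### Auxiliary lemmas -/

lemma frobSq_eq_trace {m n : Type*} [Fintype m] [Fintype n] [DecidableEq n] (A : Matrix m n ℝ) :
    frobSq A = (Aᵀ * A).trace := by
  rw [frobSq, Matrix.trace, Finset.sum_comm]
  simp [Matrix.mul_apply, Matrix.diag, sq]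

lemma frobSq_sub {m n : Type*} [Fintype m] [Fintype n] [DecidableEq n] (A B : Matrix m n ℝ) :
    frobSq (A - B) = frobSq A + frobSq B - 2 * (Aᵀ * B).trace := by
  have h : (Bᵀ * A).trace = (Aᵀ * B).trace := by
    rw [← Matrix.trace_transpose (Aᵀ * B), Matrix.transpose_mul, Matrix.transpose_transpose]
  rw [frobSq_eq_trace, frobSq_eq_trace, frobSq_eq_trace, Matrix.transpose_sub,
    Matrix.sub_mul, Matrix.mul_sub, Matrix.mul_sub, Matrix.trace_sub, Matrix.trace_sub,
    Matrix.trace_sub, h]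
  ring

lemma frobSq_mul_orth {n : Type*} [Fintype n] [DecidableEq n] (U A : Matrix n n ℝ)
    (hU : Uᵀ * U = 1) : frobSq (U * A) = frobSq A := by
  rw [frobSq_eq_trace, frobSq_eq_trace, Matrix.transpose_mul, Matrix.mul_assoc,
    ← Matrix.mul_assoc Uᵀ U A, hU, Matrix.one_mul]

/-- block embedding of `Pp k l` at block position `(k,l)` -/
def Emat {K N : ℕ} (Pp : Fin K → Fin K → Matrix (Fin N) (Fin N) ℝ) (k l : Fin K) :
    Matrix (Fin K × Fin N) (Fin K × Fin N) ℝ :=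
  Matrix.of fun p q => if p.1 = k ∧ q.1 = l then Pp k l p.2 q.2 else 0

lemma GCL_decomp {K N : ℕ} (w : Fin K → Fin K → ℝ)
    (Pp : Fin K → Fin K → Matrix (Fin N) (Fin N) ℝ) :
    GCL w Pp = Matrix.diagonal (fun p : Fin K × Fin N =>
        ∑ l ∈ Finset.univ.filter (fun l => l ≠ p.1), w p.1 l)
      - ∑ k, ∑ l ∈ Finset.univ.filter (fun l => l ≠ k), w k l • Emat Pp k l := by
  ext p q
  obtain ⟨a, i⟩ := p; obtain ⟨b, m⟩ := q
  simp only [GCL, Emat, Matrix.sub_apply, Matrix.sum_apply, Matrix.smul_apply,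
    Matrix.diagonal_apply, Matrix.of_apply, smul_eq_mul, mul_ite, mul_zero, ite_and]
  have hcol : (∑ x : Fin K, ∑ y ∈ Finset.univ.filter (fun l => l ≠ x),
      if a = x then if b = y then w x y * Pp x y i m else 0 else 0)
      = if a = b then 0 else w a b * Pp a b i m := by
    rw [Finset.sum_eq_single a]
    · by_cases hab : a = b
      · rw [if_pos hab]
        apply Finset.sum_eq_zero
        intro y hy
        have hya : y ≠ a := by simpa using hy
        rw [if_pos rfl, if_neg (by subst hab; exact fun h => hya h.symm)]
      · rw [if_neg hab, Finset.sum_eq_single_of_mem b (by simp [Ne.symm hab])]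
        · simp
        · intro y _ hyb; rw [if_pos rfl, if_neg (fun h => hyb h.symm)]
    · intro x _ hxa
      exact Finset.sum_eq_zero fun y _ => if_neg (fun h => hxa h.symm)
    · simp
  rw [hcol]
  by_cases hab : a = b
  · subst hab
    by_cases him : i = m <;> simp [Prod.ext_iff, him]
  · simp [hab, Prod.ext_iff]

lemma trace_diag {K N : ℕ} (d : Fin K → ℝ) (P : Fin K → Matrix (Fin N) (Fin N) ℝ) :
    ((stacked P)ᵀ * (Matrix.diagonal (fun p : Fin K × Fin N => d p.1) * stacked P)).trace
      = ∑ k, d k * frobSq (P k) := by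
  simp only [Matrix.trace, Matrix.diag, Matrix.mul_apply, Matrix.transpose_apply,
    Matrix.diagonal_apply, stacked, Matrix.of_apply, frobSq, ite_mul, zero_mul,
    Finset.sum_ite_eq, Finset.mem_univ, if_true]
  rw [Finset.sum_comm]
  rw [Fintype.sum_prod_type]
  apply Finset.sum_congr rfl; intro k _
  rw [Finset.mul_sum]
  apply Finset.sum_congr rfl; intro i _
  rw [Finset.mul_sum]
  apply Finset.sum_congr rfl; intro j _
  ring

lemma trace_Emat {K N : ℕ} (Pp : Fin K → Fin K → Matrix (Fin N) (Fin N) ℝ)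
    (P : Fin K → Matrix (Fin N) (Fin N) ℝ) (k l : Fin K) :
    ((stacked P)ᵀ * (Emat Pp k l * stacked P)).trace
      = ((P k)ᵀ * (Pp k l * P l)).trace := by
  simp only [Matrix.trace, Matrix.diag, Matrix.mul_apply, Matrix.transpose_apply,
    Emat, stacked, Matrix.of_apply, ite_and, ite_mul, zero_mul]
  apply Finset.sum_congr rfl; intro j _
  rw [Fintype.sum_prod_type]
  rw [Finset.sum_eq_single k]
  · apply Finset.sum_congr rfl; intro i _
    congr 1
    rw [Fintype.sum_prod_type]
    rw [Finset.sum_eq_single l]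
    · simp
    · intro b _ hb
      apply Finset.sum_eq_zero; intro m _
      simp [hb]
    · simp
  · intro b _ hb
    apply Finset.sum_eq_zero; intro i _
    simp [hb]
  · simp

lemma sum_ne_swap {K : ℕ} (g : Fin K → Fin K → ℝ) :
    ∑ k, ∑ l ∈ Finset.univ.filter (fun l => l ≠ k), g k l
      = ∑ k, ∑ l ∈ Finset.univ.filter (fun l => l ≠ k), g l k := by
  simp only [Finset.sum_filter]
  rw [Finset.sum_comm]
  apply Finset.sum_congr rfl; intro k _
  apply Finset.sum_congr rfl; intro l _
  by_cases h : l = k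
  · subst h; simp
  · simp [h, Ne.symm h]

lemma trace_GCL {K N : ℕ} (w : Fin K → Fin K → ℝ)
    (Pp : Fin K → Fin K → Matrix (Fin N) (Fin N) ℝ)
    (P : Fin K → Matrix (Fin N) (Fin N) ℝ) :
    ((stacked P)ᵀ * (GCL w Pp * stacked P)).trace
      = (∑ k, (∑ l ∈ Finset.univ.filter (fun l => l ≠ k), w k l) * frobSq (P k))
        - ∑ k, ∑ l ∈ Finset.univ.filter (fun l => l ≠ k),
            w k l * ((P k)ᵀ * (Pp k l * P l)).trace := by
  rw [GCL_decomp w Pp, Matrix.sub_mul, Matrix.mul_sub, Matrix.trace_sub,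
    trace_diag (fun k => ∑ l ∈ Finset.univ.filter (fun l => l ≠ k), w k l) P]
  congr 1
  simp only [Matrix.sum_mul, Matrix.mul_sum, Matrix.trace_sum, Matrix.smul_mul,
    Matrix.mul_smul, Matrix.trace_smul, smul_eq_mul]
  apply Finset.sum_congr rfl; intro k _
  apply Finset.sum_congr rfl; intro l _
  rw [trace_Emat]

lemma energy_eq {K N : ℕ} (w : Fin K → Fin K → ℝ)
    (Pp : Fin K → Fin K → Matrix (Fin N) (Fin N) ℝ)
    (horth : ∀ k l, k ≠ l → (Pp k l)ᵀ * Pp k l = 1 ∧ Pp k l * (Pp k l)ᵀ = 1)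
    (hwsymm : ∀ k l, k ≠ l → w l k = w k l)
    (P : Fin K → Matrix (Fin N) (Fin N) ℝ) :
    syncEnergy w Pp P = 2 * ((stacked P)ᵀ * (GCL w Pp * stacked P)).trace := by
  have hB : (∑ k, ∑ l ∈ Finset.univ.filter (fun l => l ≠ k), w k l * frobSq (P l))
      = ∑ k, ∑ l ∈ Finset.univ.filter (fun l => l ≠ k), w k l * frobSq (P k) := by
    rw [sum_ne_swap (fun k l => w k l * frobSq (P l))]
    apply Finset.sum_congr rfl; intro k _
    apply Finset.sum_congr rfl; intro l hl
    have hlk : l ≠ k := by simpa using hl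
    rw [hwsymm k l (Ne.symm hlk)]
  calc syncEnergy w Pp P
      = ∑ k, ∑ l ∈ Finset.univ.filter (fun l => l ≠ k),
          (w k l * frobSq (P k) + w k l * frobSq (P l)
            - 2 * (w k l * ((P k)ᵀ * (Pp k l * P l)).trace)) := by
        rw [syncEnergy]
        apply Finset.sum_congr rfl; intro k _
        apply Finset.sum_congr rfl; intro l hl
        have hlk : l ≠ k := by simpa using hl
        rw [frobSq_sub, frobSq_mul_orth _ _ (horth k l (Ne.symm hlk)).1]
        ring
    _ = (∑ k, ∑ l ∈ Finset.univ.filter (fun l => l ≠ k), w k l * frobSq (P k))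
        + (∑ k, ∑ l ∈ Finset.univ.filter (fun l => l ≠ k), w k l * frobSq (P l))
        - 2 * ∑ k, ∑ l ∈ Finset.univ.filter (fun l => l ≠ k),
            w k l * ((P k)ᵀ * (Pp k l * P l)).trace := by
        simp only [Finset.sum_sub_distrib, Finset.sum_add_distrib, ← Finset.mul_sum]
    _ = 2 * ((stacked P)ᵀ * (GCL w Pp * stacked P)).trace := by
        rw [hB, trace_GCL]
        have hA : ∀ k, (∑ l ∈ Finset.univ.filter (fun l => l ≠ k), w k l) * frobSq (P k)
            = ∑ l ∈ Finset.univ.filter (fun l => l ≠ k), w k l * frobSq (P k) := fun k =>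
          Finset.sum_mul _ _ _
        simp only [hA]
        ring

lemma sum_castLE {M N : ℕ} (hN : 1 ≤ N) (h : N ≤ M) (f : Fin M → ℝ) :
    ∑ j : Fin N, f (Fin.castLE h j)
      = ∑ t ∈ Finset.univ.filter (fun t : Fin M => (t : ℕ) < N), f t := by
  refine Finset.sum_nbij' (i := fun j => Fin.castLE h j)
    (j := fun t => ⟨(t : ℕ) % N, Nat.mod_lt _ (by omega)⟩) ?_ ?_ ?_ ?_ ?_
  · intro a _; simp [a.isLt]
  · intro t ht; simp
  · intro a _; simp [Nat.mod_eq_of_lt a.isLt]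
  · intro t ht
    have : (t : ℕ) < N := by simpa using (Finset.mem_filter.mp ht).2
    simp [Fin.ext_iff, Nat.mod_eq_of_lt this]
  · intro a _; rfl

lemma keyfan {M N : ℕ} (hN : 1 ≤ N) (h : N ≤ M) (μ : Fin M → ℝ) (hμ : Monotone μ)
    (c : Fin M → ℝ) (hc0 : ∀ t, 0 ≤ c t) (hc1 : ∀ t, c t ≤ 1)
    (hsum : ∑ t, c t = (N : ℝ)) :
    ∑ j : Fin N, μ (Fin.castLE h j) ≤ ∑ t, μ t * c t := by
  have hNM : N - 1 < M := by omega
  set m := μ ⟨N - 1, hNM⟩ with hm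
  have hsplit := Finset.sum_filter_add_sum_filter_not Finset.univ
    (fun t : Fin M => (t : ℕ) < N) (fun t => μ t * c t)
  have hone : ∑ t ∈ Finset.univ.filter (fun t : Fin M => (t : ℕ) < N), (1 : ℝ) = (N : ℝ) := by
    rw [← sum_castLE hN h]; simp
  have hcsplit := Finset.sum_filter_add_sum_filter_not Finset.univ
    (fun t : Fin M => (t : ℕ) < N) c
  rw [sum_castLE hN h]
  have h1 : ∑ t ∈ Finset.univ.filter (fun t : Fin M => (t : ℕ) < N), (μ t - m * (1 - c t))
      ≤ ∑ t ∈ Finset.univ.filter (fun t : Fin M => (t : ℕ) < N), μ t * c t := by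
    apply Finset.sum_le_sum
    intro t ht
    have htN : (t : ℕ) < N := (Finset.mem_filter.mp ht).2
    have hle : μ t ≤ m := hμ (by simp [Fin.le_def]; omega)
    nlinarith [hc0 t, hc1 t]
  have h2 : ∑ t ∈ Finset.univ.filter (fun t : Fin M => ¬ (t : ℕ) < N), m * c t
      ≤ ∑ t ∈ Finset.univ.filter (fun t : Fin M => ¬ (t : ℕ) < N), μ t * c t := by
    apply Finset.sum_le_sum
    intro t ht
    have htN : ¬ (t : ℕ) < N := (Finset.mem_filter.mp ht).2
    have hle : m ≤ μ t := hμ (by simp [Fin.le_def]; omega)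
    nlinarith [hc0 t]
  have hexp : ∑ t ∈ Finset.univ.filter (fun t : Fin M => (t : ℕ) < N), (μ t - m * (1 - c t))
      = (∑ t ∈ Finset.univ.filter (fun t : Fin M => (t : ℕ) < N), μ t)
        - m * ((N : ℝ) - ∑ t ∈ Finset.univ.filter (fun t : Fin M => (t : ℕ) < N), c t) := by
    rw [Finset.sum_sub_distrib, ← Finset.mul_sum, Finset.sum_sub_distrib, hone]
  have hrest : ∑ t ∈ Finset.univ.filter (fun t : Fin M => ¬ (t : ℕ) < N), c t
      = (N:ℝ) - ∑ t ∈ Finset.univ.filter (fun t : Fin M => (t : ℕ) < N), c t := by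
    rw [← hsum, ← hcsplit]; ring
  calc ∑ t ∈ Finset.univ.filter (fun t : Fin M => (t : ℕ) < N), μ t
      = (∑ t ∈ Finset.univ.filter (fun t : Fin M => (t : ℕ) < N), (μ t - m * (1 - c t)))
        + ∑ t ∈ Finset.univ.filter (fun t : Fin M => ¬ (t : ℕ) < N), m * c t := by
        rw [hexp, ← Finset.mul_sum, hrest]; ring
    _ ≤ (∑ t ∈ Finset.univ.filter (fun t : Fin M => (t : ℕ) < N), μ t * c t)
        + ∑ t ∈ Finset.univ.filter (fun t : Fin M => ¬ (t : ℕ) < N), μ t * c t :=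
        add_le_add h1 h2
    _ = ∑ t, μ t * c t := hsplit

lemma trace_conj_diag {a b : Type*} [Fintype a] [Fintype b] [DecidableEq a]
    (S : Matrix a b ℝ) (d : a → ℝ) :
    (Sᵀ * (Matrix.diagonal d * S)).trace = ∑ p, d p * ∑ j, (S p j)^2 := by
  simp only [Matrix.trace, Matrix.diag, Matrix.mul_apply, Matrix.transpose_apply,
    Matrix.diagonal_apply, ite_mul, zero_mul, Finset.sum_ite_eq, Finset.mem_univ, if_true]
  rw [Finset.sum_comm]
  apply Finset.sum_congr rfl; intro p _
  rw [Finset.mul_sum]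
  apply Finset.sum_congr rfl; intro j _
  ring

lemma row_le_one {a b : Type*} [Fintype a] [Fintype b] [DecidableEq a] [DecidableEq b]
    (S : Matrix a b ℝ) (hS : Sᵀ * S = 1) (p : a) : ∑ j, (S p j)^2 ≤ 1 := by
  set M := S * Sᵀ with hMdef
  have hMM : M * M = M := by
    calc M * M = S * ((Sᵀ * S) * Sᵀ) := by simp [hMdef, Matrix.mul_assoc]
      _ = M := by rw [hS, Matrix.one_mul]
  have hsym : ∀ q q', M q q' = M q' q := by
    intro q q'
    simp only [hMdef, Matrix.mul_apply, Matrix.transpose_apply]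
    exact Finset.sum_congr rfl fun j _ => mul_comm _ _
  have hpp : M p p = ∑ j, (S p j)^2 := by
    simp [hMdef, Matrix.mul_apply, sq]
  have hid : M p p = ∑ q, (M p q)^2 := by
    conv_lhs => rw [← hMM]
    rw [Matrix.mul_apply]
    exact Finset.sum_congr rfl fun q _ => by rw [sq, hsym q p]
  have h1 : (M p p)^2 ≤ ∑ q, (M p q)^2 :=
    Finset.single_le_sum (fun q _ => sq_nonneg (M p q)) (Finset.mem_univ p)
  rw [← hpp]
  nlinarith [h1, hid]

lemma trace_of_eig {K N : ℕ} (w : Fin K → Fin K → ℝ)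
    (Pp : Fin K → Fin K → Matrix (Fin N) (Fin N) ℝ)
    (P : Fin K → Matrix (Fin N) (Fin N) ℝ) (μj : Fin N → ℝ)
    (horthP : (stacked P)ᵀ * stacked P = 1)
    (heig : ∀ j, (GCL w Pp).mulVec (fun p => stacked P p j)
        = μj j • fun p => stacked P p j) :
    ((stacked P)ᵀ * (GCL w Pp * stacked P)).trace = ∑ j, μj j := by
  have hLP : GCL w Pp * stacked P
      = Matrix.of fun p j => μj j * stacked P p j := by
    ext p j
    have := congrFun (heig j) p
    simpa [Matrix.mulVec, dotProduct, Matrix.mul_apply] using this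
  rw [hLP]
  simp only [Matrix.trace, Matrix.diag, Matrix.mul_apply, Matrix.transpose_apply,
    Matrix.of_apply]
  apply Finset.sum_congr rfl; intro j _
  have h1 := congrFun (congrFun horthP j) j
  simp only [Matrix.mul_apply, Matrix.transpose_apply, Matrix.one_apply_eq] at h1
  calc ∑ p, stacked P p j * (μj j * stacked P p j)
      = μj j * ∑ p, stacked P p j * stacked P p j := by
        rw [Finset.mul_sum]; exact Finset.sum_congr rfl fun p _ => by ring
    _ = μj j := by rw [h1, mul_one]

theorem statement5 (K N : ℕ) (hK : 2 ≤ K) (hN : 1 ≤ N)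
    (w : Fin K → Fin K → ℝ) (Pp : Fin K → Fin K → Matrix (Fin N) (Fin N) ℝ)
    (horth : ∀ k l, k ≠ l → (Pp k l)ᵀ * Pp k l = 1 ∧ Pp k l * (Pp k l)ᵀ = 1)
    (hwsymm : ∀ k l, k ≠ l → w l k = w k l)
    (hPsymm : ∀ k l, k ≠ l → Pp l k = (Pp k l)ᵀ)
    -- `μ` lists the eigenvalues of the (symmetric) weighted Graph Connection Laplacian
    -- in nondecreasing order with multiplicity, as witnessed by an orthogonal
    -- diagonalization `L = Q diag(μ) Qᵀ`.
    (μ : Fin (K * N) → ℝ) (hμ : Monotone μ)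
    (Q : Matrix (Fin K × Fin N) (Fin K × Fin N) ℝ) (hQ : Qᵀ * Q = 1 ∧ Q * Qᵀ = 1)
    (hdiag : GCL w Pp = Q * Matrix.diagonal (fun p => μ (finProdFinEquiv p)) * Qᵀ) :
    -- the minimum of the synchronization energy over all stacked `𝒫` with
    -- orthonormal columns equals twice the sum of the `N` smallest eigenvalues of `L`:
    IsLeast {e : ℝ | ∃ P : Fin K → Matrix (Fin N) (Fin N) ℝ,
        (stacked P)ᵀ * stacked P = 1 ∧ e = syncEnergy w Pp P}
      (2 * ∑ j : Fin N, μ (Fin.castLE (Nat.le_mul_of_pos_left N (by omega)) j)) ∧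
    -- and it is attained by any `𝒫` whose `N` columns are orthonormal eigenvectors
    -- of `L` for the `N` smallest eigenvalues `μ_1, …, μ_N`:
    ∀ P : Fin K → Matrix (Fin N) (Fin N) ℝ,
      (stacked P)ᵀ * stacked P = 1 →
      (∀ j : Fin N,
        (GCL w Pp).mulVec (fun p => stacked P p j)
          = μ (Fin.castLE (Nat.le_mul_of_pos_left N (by omega)) j)
              • fun p => stacked P p j) →
      syncEnergy w Pp P
        = 2 * ∑ j : Fin N, μ (Fin.castLE (Nat.le_mul_of_pos_left N (by omega)) j) := by
  have hK0 : 0 < K := by omega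
  have hNM : N ≤ K * N := Nat.le_mul_of_pos_left N hK0
  set dμ : Fin K × Fin N → ℝ := fun p => μ (finProdFinEquiv p) with hdμ
  have part3 : ∀ P : Fin K → Matrix (Fin N) (Fin N) ℝ,
      (stacked P)ᵀ * stacked P = 1 →
      (∀ j : Fin N, (GCL w Pp).mulVec (fun p => stacked P p j)
          = μ (Fin.castLE hNM j) • fun p => stacked P p j) →
      syncEnergy w Pp P = 2 * ∑ j : Fin N, μ (Fin.castLE hNM j) := by
    intro P hP heig
    rw [energy_eq w Pp horth hwsymm P, trace_of_eig w Pp P _ hP heig]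
  refine ⟨⟨?_, ?_⟩, ?_⟩
  · -- membership: the first N columns of Q
    set z : Fin K := ⟨0, hK0⟩ with hz
    set P₀ : Fin K → Matrix (Fin N) (Fin N) ℝ :=
      fun k => Matrix.of fun i j => Q (k, i) (z, j) with hP₀
    have horthP₀ : (stacked P₀)ᵀ * stacked P₀ = 1 := by
      ext j j'
      have h := congrFun (congrFun hQ.1 (z, j)) (z, j')
      simp only [Matrix.mul_apply, Matrix.transpose_apply, Matrix.one_apply] at h ⊢
      simp only [stacked, Matrix.of_apply, hP₀]
      rw [show (∑ p : Fin K × Fin N, Q (p.1, p.2) (z, j) * Q (p.1, p.2) (z, j'))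
          = ∑ p : Fin K × Fin N, Q p (z, j) * Q p (z, j') from
        Finset.sum_congr rfl fun p _ => rfl, h]
      by_cases hjj : j = j' <;> simp [hjj, Prod.ext_iff]
    have hLQ : GCL w Pp * Q = Q * Matrix.diagonal dμ := by
      rw [hdiag, Matrix.mul_assoc (Q * Matrix.diagonal dμ) Qᵀ Q, hQ.1, Matrix.mul_one]
    have hcast : ∀ j : Fin N, finProdFinEquiv (z, j) = Fin.castLE hNM j := by
      intro j; ext; simp [finProdFinEquiv, hz]
    have heig₀ : ∀ j : Fin N, (GCL w Pp).mulVec (fun p => stacked P₀ p j)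
        = μ (Fin.castLE hNM j) • fun p => stacked P₀ p j := by
      intro j
      funext p
      have h := congrFun (congrFun hLQ p) (z, j)
      rw [Matrix.mul_diagonal, Matrix.mul_apply] at h
      simp only [Matrix.mulVec, dotProduct, stacked, Matrix.of_apply, hP₀,
        Pi.smul_apply, smul_eq_mul]
      rw [show (∑ q : Fin K × Fin N, GCL w Pp p q * Q (q.1, q.2) (z, j))
          = ∑ q : Fin K × Fin N, GCL w Pp p q * Q q (z, j) from
        Finset.sum_congr rfl fun q _ => rfl, h]
      have hd : dμ (z, j) = μ (Fin.castLE hNM j) := by rw [hdμ]; simp only []; rw [hcast j]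
      rw [hd]
      ring
    exact ⟨P₀, horthP₀, (part3 P₀ horthP₀ heig₀).symm⟩
  · -- lower bound
    rintro e ⟨P, hP, rfl⟩
    show 2 * ∑ j : Fin N, μ (Fin.castLE hNM j) ≤ syncEnergy w Pp P
    rw [energy_eq w Pp horth hwsymm P]
    set S := Qᵀ * stacked P with hS
    have hStS : Sᵀ * S = 1 := by
      rw [hS, Matrix.transpose_mul, Matrix.transpose_transpose,
        Matrix.mul_assoc, ← Matrix.mul_assoc Q Qᵀ (stacked P), hQ.2, Matrix.one_mul, hP]
    have htr : ((stacked P)ᵀ * (GCL w Pp * stacked P)).trace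
        = ∑ p : Fin K × Fin N, dμ p * ∑ j, (S p j)^2 := by
      have hconj : (stacked P)ᵀ * (GCL w Pp * stacked P)
          = Sᵀ * (Matrix.diagonal dμ * S) := by
        rw [hdiag, hS, Matrix.transpose_mul, Matrix.transpose_transpose]
        simp only [Matrix.mul_assoc]
      rw [hconj, trace_conj_diag]
    have hconv : ∑ p : Fin K × Fin N, dμ p * ∑ j, (S p j)^2
        = ∑ t : Fin (K * N), μ t * ∑ j, (S (finProdFinEquiv.symm t) j)^2 := by
      apply Fintype.sum_equiv finProdFinEquiv
      intro p
      simp [hdμ]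
    have hsumc : ∑ t : Fin (K * N), (∑ j, (S (finProdFinEquiv.symm t) j)^2) = (N : ℝ) := by
      have h1 : ∑ t : Fin (K * N), (∑ j, (S (finProdFinEquiv.symm t) j)^2)
          = ∑ p : Fin K × Fin N, ∑ j, (S p j)^2 := by
        apply Fintype.sum_equiv finProdFinEquiv.symm
        intro t; rfl
      rw [h1]
      have h2 : frobSq S = (N : ℝ) := by
        rw [frobSq_eq_trace, hStS, Matrix.trace_one]
        simp
      rw [← h2, frobSq]
    have hkf := keyfan hN hNM μ hμ (fun t => ∑ j, (S (finProdFinEquiv.symm t) j)^2)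
      (fun t => Finset.sum_nonneg fun j _ => sq_nonneg _)
      (fun t => row_le_one S hStS _) hsumc
    rw [htr, hconv]
    linarith [hkf]
  · intro P hP heig
    exact part3 P hP heig
end

section
/- (Weighted synchronization for segmentation, forward direction.) Let K, N, S ≥ 1, for each k = 1, …, K let G^k ∈ ℝ^{N×S} be a binary point-part association matrix, let w^{kl} ∈ ℝ for 1 ≤ k,l ≤ K, let D^1, …, D^K ∈ ℝ^{S×S} be diagonal matrices, and let Z̃ ∈ ℝ^{KN×KN} be the block matrix with (k,l) block w^{kl} G^k (G^l)ᵀ. Fix a part index s, let J^s ∈ ℝ^{K×K} be the matrix with entries J^s_{kl} = w^{kl} n^l_s, and let d^s ∈ ℝ^K have entries d^s_k = D^k_{ss}. If J^s d^s = λ d^s for some λ ∈ ℝ, then the s-th column v of the stacked matrix G_w = [G^1D^1; …; G^KD^K] ∈ ℝ^{KN×S} satisfies Z̃ v = λ v. -/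
open scoped Matrix

/-- `G` is a binary point-part association matrix: every entry is `0` or `1`
and every row has exactly one entry equal to `1`. -/
def IsAssocMatrix {N S : ℕ} (G : Matrix (Fin N) (Fin S) ℝ) : Prop :=
  (∀ i s, G i s = 0 ∨ G i s = 1) ∧ ∀ i, ∃! s, G i s = 1

/-- `n^k_s`: the number of points of the given scan assigned to part `s`. -/
noncomputable def nPart {N S : ℕ} (G : Matrix (Fin N) (Fin S) ℝ) (s : Fin S) : ℕ :=
  (Finset.univ.filter fun i => G i s = 1).card

/-- The weighted block matrix `Z̃` whose `(k,l)` block is `w^{kl} G^k (G^l)ᵀ`. -/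
def Ztilde {K N S : ℕ} (w : Fin K → Fin K → ℝ)
    (G : Fin K → Matrix (Fin N) (Fin S) ℝ) :
    Matrix (Fin K × Fin N) (Fin K × Fin N) ℝ :=
  Matrix.of fun p q => w p.1 q.1 * (G p.1 * (G q.1)ᵀ) p.2 q.2

theorem statement12 (K N S : ℕ) (hK : 1 ≤ K) (hN : 1 ≤ N) (hS : 1 ≤ S)
    (G : Fin K → Matrix (Fin N) (Fin S) ℝ) (hG : ∀ k, IsAssocMatrix (G k))
    (w : Fin K → Fin K → ℝ)
    (D : Fin K → Matrix (Fin S) (Fin S) ℝ) (hD : ∀ k, (D k).IsDiag)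
    (s : Fin S) (lam : ℝ)
    -- `J^s d^s = λ d^s`, where `J^s_{kl} = w^{kl} n^l_s` and `d^s_k = D^k_{ss}`:
    (hJ : (Matrix.of fun k l : Fin K => w k l * (nPart (G l) s : ℝ)).mulVec
        (fun k => D k s s) = lam • fun k => D k s s) :
    -- then the `s`-th column of `G_w = [G¹D¹; …; G^K D^K]` is mapped by `Z̃` to `λ`
    -- times itself:
    (Ztilde w G).mulVec (fun p => (G p.1 * D p.1) p.2 s)
      = lam • fun p => (G p.1 * D p.1) p.2 s := by
  have hzero : ∀ (M : Matrix (Fin N) (Fin S) ℝ), IsAssocMatrix M →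
      ∀ (j : Fin N) (t : Fin S), t ≠ s → M j t * M j s = 0 := by
    intro M hM j t ht
    rcases hM.1 j t with h | h
    · simp [h]
    rcases hM.1 j s with h' | h'
    · simp [h']
    exact absurd ((hM.2 j).unique h h') ht
  have hidem : ∀ (M : Matrix (Fin N) (Fin S) ℝ), IsAssocMatrix M →
      ∀ j : Fin N, M j s * M j s = M j s := by
    intro M hM j; rcases hM.1 j s with h | h <;> simp [h]
  have hsum : ∀ (M : Matrix (Fin N) (Fin S) ℝ), IsAssocMatrix M →
      ∑ j : Fin N, M j s = (nPart M s : ℝ) := by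
    intro M hM
    have h : ∀ j, M j s = if M j s = 1 then (1 : ℝ) else 0 := fun j => by
      rcases hM.1 j s with h | h <;> simp [h]
    rw [Finset.sum_congr rfl fun j _ => h j, Finset.sum_boole]
    rfl
  have hvcol : ∀ (k : Fin K) (i : Fin N), (G k * D k) i s = G k i s * D k s s := by
    intro k i
    rw [Matrix.mul_apply]
    exact Finset.sum_eq_single s (fun t _ ht => by rw [hD k ht, mul_zero]) (by simp)
  funext p
  obtain ⟨k, i⟩ := p
  have hJk := congrFun hJ k
  simp only [Matrix.mulVec, dotProduct, Matrix.of_apply, Pi.smul_apply,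
    smul_eq_mul] at hJk ⊢
  rw [Fintype.sum_prod_type]
  have key : ∀ l : Fin K,
      ∑ j : Fin N, Ztilde w G (k, i) (l, j) * ((G l * D l) j s)
        = w k l * (nPart (G l) s : ℝ) * D l s s * G k i s := by
    intro l
    have hinner : ∀ j : Fin N,
        (∑ t : Fin S, G k i t * G l j t) * G l j s = G k i s * G l j s := by
      intro j
      rw [Finset.sum_mul]
      have := Finset.sum_eq_single (f := fun t => G k i t * G l j t * G l j s) s
        (fun t _ ht => by
          show G k i t * G l j t * G l j s = 0
          rw [mul_assoc, hzero (G l) (hG l) j t ht, mul_zero])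
        (fun h => absurd (Finset.mem_univ s) h)
      rw [this]
      show G k i s * G l j s * G l j s = _
      rw [mul_assoc, hidem (G l) (hG l) j]
    have hterm : ∀ j : Fin N, Ztilde w G (k, i) (l, j) * ((G l * D l) j s)
        = w k l * D l s s * (G k i s * G l j s) := by
      intro j
      rw [hvcol l j]
      simp only [Ztilde, Matrix.of_apply, Matrix.mul_apply, Matrix.transpose_apply]
      rw [← hinner j]
      ring
    rw [Finset.sum_congr rfl fun j _ => hterm j, ← Finset.mul_sum]
    have : ∑ j : Fin N, G k i s * G l j s = G k i s * (nPart (G l) s : ℝ) := by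
      rw [← Finset.mul_sum, hsum (G l) (hG l)]
    rw [this]; ring
  rw [Finset.sum_congr rfl fun l _ => key l, hvcol k i]
  have : ∑ l : Fin K, w k l * (nPart (G l) s : ℝ) * D l s s * G k i s
      = (∑ l : Fin K, w k l * (nPart (G l) s : ℝ) * D l s s) * G k i s := by
    rw [Finset.sum_mul]
  rw [this, hJk]; ring
end

section
/- (Weighted synchronization for segmentation, converse direction.) Let K, N, S ≥ 1, for each k = 1, …, K let G^k ∈ ℝ^{N×S} be a binary point-part association matrix, let w^{kl} ∈ ℝ for 1 ≤ k,l ≤ K, let D^1, …, D^K ∈ ℝ^{S×S} be diagonal matrices, and let Z̃ ∈ ℝ^{KN×KN} be the block matrix with (k,l) block w^{kl} G^k (G^l)ᵀ. Fix a part index s and assume that for every k there is at least one index i with G^k_{is} = 1 (part s is nonempty in every scan). Let J^s ∈ ℝ^{K×K} have entries J^s_{kl} = w^{kl} n^l_s and let d^s ∈ ℝ^K have entries d^s_k = D^k_{ss}. If the s-th column v of the stacked matrix G_w = [G^1D^1; …; G^KD^K] satisfies Z̃ v = λ v for some λ ∈ ℝ, then J^s d^s = λ d^s. -/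
open scoped Matrix

lemma sum_col_eq_nPart {N S : ℕ} {G : Matrix (Fin N) (Fin S) ℝ}
    (hG : IsAssocMatrix G) (s : Fin S) :
    ∑ j, G j s = (nPart G s : ℝ) := by
  rw [nPart, Finset.card_filter]
  push_cast
  refine Finset.sum_congr rfl fun j _ => ?_
  rcases hG.1 j s with h | h <;> simp [h]

lemma mul_diag_col {N S : ℕ} {G : Matrix (Fin N) (Fin S) ℝ}
    {D : Matrix (Fin S) (Fin S) ℝ} (hD : D.IsDiag) (j : Fin N) (s : Fin S) :
    (G * D) j s = G j s * D s s := by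
  rw [Matrix.mul_apply]
  refine Finset.sum_eq_single s (fun t _ ht => ?_) (by simp)
  rw [hD ht, mul_zero]

lemma row_dot {N S : ℕ} {A B : Matrix (Fin N) (Fin S) ℝ}
    (hB : IsAssocMatrix B) (i j : Fin N) (s : Fin S) :
    (∑ t, A i t * B j t) * B j s = A i s * B j s := by
  rcases hB.1 j s with h | h
  · simp [h]
  · have key : ∑ t, A i t * B j t = A i s * B j s := by
      refine Finset.sum_eq_single s (fun t _ ht => ?_) (fun hn => absurd (Finset.mem_univ s) hn)
      obtain ⟨u, hu, huniq⟩ := hB.2 j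
      have hus : u = s := (huniq s h).symm
      have hz : B j t = 0 := by
        rcases hB.1 j t with h' | h'
        · exact h'
        · exact absurd (huniq t h' ▸ hus ▸ rfl : t = s) ht
      rw [hz, mul_zero]
    rw [key, h, mul_one, mul_one]

theorem statement13 (K N S : ℕ) (hK : 1 ≤ K) (hN : 1 ≤ N) (hS : 1 ≤ S)
    (G : Fin K → Matrix (Fin N) (Fin S) ℝ) (hG : ∀ k, IsAssocMatrix (G k))
    (w : Fin K → Fin K → ℝ)
    (D : Fin K → Matrix (Fin S) (Fin S) ℝ) (hD : ∀ k, (D k).IsDiag)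
    (s : Fin S)
    -- part `s` is nonempty in every scan:
    (hne : ∀ k, ∃ i, G k i s = 1)
    (lam : ℝ)
    -- if the `s`-th column of `G_w = [G¹D¹; …; G^K D^K]` satisfies `Z̃ v = λ v` …
    (hv : (Ztilde w G).mulVec (fun p => (G p.1 * D p.1) p.2 s)
        = lam • fun p => (G p.1 * D p.1) p.2 s) :
    -- … then `J^s d^s = λ d^s`, where `J^s_{kl} = w^{kl} n^l_s` and `d^s_k = D^k_{ss}`:
    (Matrix.of fun k l : Fin K => w k l * (nPart (G l) s : ℝ)).mulVec
        (fun k => D k s s) = lam • fun k => D k s s := by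
  funext k
  obtain ⟨i, hi⟩ := hne k
  have h := congrFun hv (k, i)
  simp only [Matrix.mulVec, dotProduct, Pi.smul_apply, smul_eq_mul,
    Ztilde, Matrix.of_apply] at h ⊢
  rw [Fintype.sum_prod_type] at h
  -- rewrite RHS of h
  rw [mul_diag_col (hD k) i s, hi, one_mul] at h
  -- rewrite LHS of h
  have hL : ∀ l : Fin K, ∑ j, w k l * (G k * (G l)ᵀ) i j * (G l * D l) j s
      = w k l * (nPart (G l) s : ℝ) * D l s s := by
    intro l
    have : ∀ j, w k l * (G k * (G l)ᵀ) i j * (G l * D l) j s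
        = w k l * (G l j s * D l s s) := by
      intro j
      rw [mul_diag_col (hD l) j s, Matrix.mul_apply]
      simp only [Matrix.transpose_apply]
      rw [mul_assoc, ← mul_assoc ((∑ t, G k i t * G l j t)), row_dot (hG l) i j s,
        hi, one_mul]
    rw [Finset.sum_congr rfl fun j _ => this j, ← Finset.mul_sum, ← Finset.sum_mul,
      sum_col_eq_nPart (hG l) s, mul_assoc]
  rw [Finset.sum_congr rfl fun l _ => hL l] at h
  exact h
end

section
/- Let K, N, S ≥ 1, for each k = 1, …, K let G^k ∈ ℝ^{N×S} be a binary point-part association matrix, let w^{kl} ∈ ℝ for 1 ≤ k,l ≤ K, and let Z̃ ∈ ℝ^{KN×KN} be the block matrix with (k,l) block w^{kl} G^k (G^l)ᵀ. Fix a part index s such that for every k there is at least one index i with G^k_{is} = 1. Then the s-th column v of the unscaled stack G = [G^1; …; G^K] satisfies Z̃ v = λ v for some λ ∈ ℝ if and only if Σ_{l=1}^K w^{kl} n^l_s = λ for every k = 1, …, K (i.e., all rows of the matrix (w^{kl} n^l_s)_{k,l} have the same sum λ). -/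
open scoped Matrix

theorem statement14 (K N S : ℕ) (hK : 1 ≤ K) (hN : 1 ≤ N) (hS : 1 ≤ S)
    (G : Fin K → Matrix (Fin N) (Fin S) ℝ) (hG : ∀ k, IsAssocMatrix (G k))
    (w : Fin K → Fin K → ℝ)
    (s : Fin S)
    -- part `s` is nonempty in every scan:
    (hne : ∀ k, ∃ i, G k i s = 1)
    (lam : ℝ) :
    -- the `s`-th column of the unscaled stack `G = [G¹; …; G^K]` satisfies `Z̃ v = λ v`
    -- iff every row of the matrix `(w^{kl} n^l_s)_{k,l}` sums to `λ`:
    (Ztilde w G).mulVec (fun p => G p.1 p.2 s) = lam • (fun p => G p.1 p.2 s)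
      ↔ ∀ k : Fin K, ∑ l : Fin K, w k l * (nPart (G l) s : ℝ) = lam := by

  -- key pointwise identity
  have key : ∀ (k l : Fin K) (i j : Fin N),
      (G k * (G l)ᵀ) i j * G l j s = G k i s * G l j s := by
    intro k l i j
    rcases (hG l).1 j s with h | h
    · simp [h]
    · simp only [h, mul_one]
      rw [Matrix.mul_apply, Finset.sum_eq_single s]
      · simp [Matrix.transpose_apply, h]
      · intro t _ hts
        obtain ⟨t0, ht0, huniq⟩ := (hG l).2 j
        have : G l j t = 0 := by
          rcases (hG l).1 j t with h0 | h1
          · exact h0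
          · exact absurd ((huniq t h1).trans (huniq s h).symm) hts
        simp [Matrix.transpose_apply, this]
      · simp
  have hsum : ∀ l : Fin K, ∑ j : Fin N, G l j s = (nPart (G l) s : ℝ) := by
    intro l
    rw [nPart, Finset.card_filter]
    push_cast
    refine Finset.sum_congr rfl fun j _ => ?_
    rcases (hG l).1 j s with h | h <;> simp [h]
  have hmv : ∀ p : Fin K × Fin N,
      (Ztilde w G).mulVec (fun p => G p.1 p.2 s) p
        = G p.1 p.2 s * ∑ l : Fin K, w p.1 l * (nPart (G l) s : ℝ) := by
    rintro ⟨k, i⟩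
    rw [Matrix.mulVec, dotProduct, Fintype.sum_prod_type]
    rw [Finset.mul_sum]
    refine Finset.sum_congr rfl fun l _ => ?_
    have : ∀ j : Fin N, Ztilde w G (k, i) (l, j) * G l j s
        = w k l * (G k i s * G l j s) := by
      intro j
      simp only [Ztilde, Matrix.of_apply]
      rw [mul_assoc, key]
    rw [Finset.sum_congr rfl fun j _ => this j]
    rw [← Finset.mul_sum, ← Finset.mul_sum, hsum]
    ring
  constructor
  · intro H k
    obtain ⟨i, hi⟩ := hne k
    have := congrFun H (k, i)
    rw [hmv (k, i)] at this
    simpa [hi] using this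
  · intro H
    funext p
    rw [hmv p, H p.1]
    simp [mul_comm]
end
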